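/- arXiv:2207.04963 — 2 statements merged into one kernel-verified Lean document; each statement's English description precedes it below -/
import Mathlib

section
/- Let T₁₁ = [[L, A, −A],[A, Z+B, −B],[−A, −B, B]] with L, Z > 0, B > 0, and A² < B·L. Then T₁₁ is invertible with det T₁₁ = Z(BL − A²), and T₁₁⁻¹ = [[(L − A²/B)⁻¹, 0, −(A − LB/A)⁻¹],[0, Z⁻¹, Z⁻¹],[−(A − LB/A)⁻¹, Z⁻¹, Z⁻¹ + (B − A²/L)⁻¹]] (when additionally A ≠ 0 so that the off-diagonal entries are well defined). -/
open Matrix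

theorem T11_inverse (L A Z B : ℝ) (hL : 0 < L) (hZ : 0 < Z) (hB : 0 < B)
    (hA : A ^ 2 < B * L) (hA0 : A ≠ 0) :
    IsUnit (!![L, A, -A; A, Z + B, -B; -A, -B, B] : Matrix (Fin 3) (Fin 3) ℝ).det ∧
    (!![L, A, -A; A, Z + B, -B; -A, -B, B] : Matrix (Fin 3) (Fin 3) ℝ).det
      = Z * (B * L - A ^ 2) ∧
    (!![L, A, -A; A, Z + B, -B; -A, -B, B] : Matrix (Fin 3) (Fin 3) ℝ)⁻¹ =
      !![(L - A ^ 2 / B)⁻¹, 0, -(A - L * B / A)⁻¹;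
         0, Z⁻¹, Z⁻¹;
         -(A - L * B / A)⁻¹, Z⁻¹, Z⁻¹ + (B - A ^ 2 / L)⁻¹] := by
  have hD : 0 < B * L - A ^ 2 := by linarith
  have hdet : (!![L, A, -A; A, Z + B, -B; -A, -B, B] : Matrix (Fin 3) (Fin 3) ℝ).det
      = Z * (B * L - A ^ 2) := by
    simp [Matrix.det_fin_three]; ring
  have hdet0 : (!![L, A, -A; A, Z + B, -B; -A, -B, B] : Matrix (Fin 3) (Fin 3) ℝ).det ≠ 0 := by
    rw [hdet]; positivity
  have hL0 : L ≠ 0 := hL.ne'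
  have hB0 : B ≠ 0 := hB.ne'
  have hZ0 : Z ≠ 0 := hZ.ne'
  have h1 : L - A ^ 2 / B ≠ 0 := by
    have : 0 < L - A ^ 2 / B := by
      rw [sub_pos, div_lt_iff₀ hB]; nlinarith
    exact this.ne'
  have h3 : B - A ^ 2 / L ≠ 0 := by
    have : 0 < B - A ^ 2 / L := by
      rw [sub_pos, div_lt_iff₀ hL]; nlinarith
    exact this.ne'
  have h2 : A - L * B / A ≠ 0 := by
    intro h
    have : A ^ 2 = L * B := by field_simp at h; nlinarith [sq_nonneg A]
    nlinarith
  have hD0 : B * L - A ^ 2 ≠ 0 := hD.ne'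
  have hD0' : L * B - A ^ 2 ≠ 0 := by intro h; apply hD0; linarith
  have hD2 : A ^ 2 - L * B ≠ 0 := by intro h; apply hD0; linarith
  have hD3 : A ^ 2 - B * L ≠ 0 := by intro h; apply hD0; linarith
  have hD4 : -(L * B) + A ^ 2 ≠ 0 := by intro h; apply hD0; linarith
  have hD5 : -A ^ 2 + B * L ≠ 0 := by intro h; apply hD0; linarith
  have e1 : (L - A ^ 2 / B)⁻¹ = B / (B * L - A ^ 2) := by
    rw [eq_div_iff hD0, inv_mul_eq_iff_eq_mul₀ h1]; field_simp <;> ring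
  have e2 : (A - L * B / A)⁻¹ = -(A / (B * L - A ^ 2)) := by
    rw [show -(A / (B * L - A ^ 2)) = (-A) / (B * L - A ^ 2) from (neg_div _ _).symm,
      eq_div_iff hD0, inv_mul_eq_iff_eq_mul₀ h2]; field_simp <;> ring
  have e3 : (B - A ^ 2 / L)⁻¹ = L / (B * L - A ^ 2) := by
    rw [eq_div_iff hD0, inv_mul_eq_iff_eq_mul₀ h3]; field_simp <;> ring
  refine ⟨isUnit_iff_ne_zero.mpr hdet0, hdet, ?_⟩
  apply Matrix.inv_eq_right_inv
  rw [e1, e2, e3]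
  rw [Matrix.mul_fin_three, Matrix.one_fin_three]
  ext i j
  fin_cases i <;> fin_cases j <;> simp [vecHead, vecTail] <;> field_simp <;> ring
end

section
/- With T₁₁ as above, the (3,3) entry of T₁₁⁻¹ equals Z⁻¹ + (B − A²/L)⁻¹, which is strictly greater than the (2,2) entry Z⁻¹; i.e., the asymptotic HCRB on the absolute orientation exceeds the HCRB on the direction, their difference being the relative-orientation bound (B − A²/L)⁻¹. -/
/-!
In the coordinates `(x₀, x₁, y)` with `y = x₁ - x₂` the quadratic form of `T₁₁` splits as
`Z x₁² + (L x₀² + 2 A x₀ y + B y²)`, so `T₁₁⁻¹` is obtained by inverting the scalar `Z` and the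
`2 × 2` block `[[L, A], [A, B]]` and transforming back. Its `(2, 2)` entry is
`Z⁻¹ + L / (L B - A²) = Z⁻¹ + (B - A² / L)⁻¹`, the second summand being the inverse of the Schur
complement of `L`, which is positive.
-/

open Matrix

theorem inv_orientation_matrix {K : Type*} [Field K] {L A Z B : K} (hZ : Z ≠ 0)
    (hD : L * B - A ^ 2 ≠ 0) :
    (!![L, A, -A; A, Z + B, -B; -A, -B, B] : Matrix (Fin 3) (Fin 3) K)⁻¹ =
      !![B / (L * B - A ^ 2), 0, A / (L * B - A ^ 2);
        0, Z⁻¹, Z⁻¹;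
        A / (L * B - A ^ 2), Z⁻¹, Z⁻¹ + L / (L * B - A ^ 2)] := by
  refine inv_eq_right_inv ?_
  ext i j
  fin_cases i <;> fin_cases j <;>
    simp [mul_apply, Fin.sum_univ_three] <;> field_simp <;> ring

theorem div_sub_sq_eq_inv_schur {K : Type*} [Field K] {L A B : K} (hL : L ≠ 0) :
    L / (L * B - A ^ 2) = (B - A ^ 2 / L)⁻¹ := by
  rw [sub_div' hL, inv_div, mul_comm B]

theorem orientation_hcrb_exceeds_direction_general (L A Z B : ℝ)
    (hL : 0 < L) (hZ : 0 < Z) (hA : A ^ 2 < B * L) :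
    (!![L, A, -A; A, Z + B, -B; -A, -B, B] : Matrix (Fin 3) (Fin 3) ℝ)⁻¹ 2 2
      = Z⁻¹ + (B - A ^ 2 / L)⁻¹ ∧
    (!![L, A, -A; A, Z + B, -B; -A, -B, B] : Matrix (Fin 3) (Fin 3) ℝ)⁻¹ 1 1 = Z⁻¹ ∧
    (!![L, A, -A; A, Z + B, -B; -A, -B, B] : Matrix (Fin 3) (Fin 3) ℝ)⁻¹ 1 1 <
      (!![L, A, -A; A, Z + B, -B; -A, -B, B] : Matrix (Fin 3) (Fin 3) ℝ)⁻¹ 2 2 := by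
  have hD : 0 < L * B - A ^ 2 := by linarith
  have hSchur : 0 < B - A ^ 2 / L := by
    rw [sub_pos, div_lt_iff₀ hL]
    exact hA
  rw [inv_orientation_matrix hZ.ne' hD.ne']
  simp only [of_apply, cons_val, cons_val_one, div_sub_sq_eq_inv_schur hL.ne', true_and]
  exact lt_add_of_pos_right _ (inv_pos.mpr hSchur)

theorem orientation_hcrb_exceeds_direction (L A Z B : ℝ)
    (hL : 0 < L) (hZ : 0 < Z) (hB : 0 < B) (hA : A ^ 2 < B * L) :
    (!![L, A, -A; A, Z + B, -B; -A, -B, B] : Matrix (Fin 3) (Fin 3) ℝ)⁻¹ 2 2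
      = Z⁻¹ + (B - A ^ 2 / L)⁻¹ ∧
    (!![L, A, -A; A, Z + B, -B; -A, -B, B] : Matrix (Fin 3) (Fin 3) ℝ)⁻¹ 1 1 = Z⁻¹ ∧
    (!![L, A, -A; A, Z + B, -B; -A, -B, B] : Matrix (Fin 3) (Fin 3) ℝ)⁻¹ 1 1 <
      (!![L, A, -A; A, Z + B, -B; -A, -B, B] : Matrix (Fin 3) (Fin 3) ℝ)⁻¹ 2 2 :=
  orientation_hcrb_exceeds_direction_general L A Z B hL hZ hA
end
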